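/- arXiv:1208.0353 — 2 statements merged into one kernel-verified Lean document; each statement's English description precedes it below -/
import Mathlib

section
/- (Update step bound) Let y = Ax + e where x is k-sparse in D, let T be an index set with |T| ≤ 3k, and let x̃ = argmin_{z ∈ R(D_T)} ‖y − Az‖. If A satisfies the D-RIP of order 4k with constant δ_{4k}, then ‖x − x̃‖ ≤ √((1+δ_{4k})/(1−δ_{4k})) ‖P_{T⊥} x‖ + (2/√(1−δ_{4k})) ‖e‖. -/
noncomputable section

abbrev Vec (n : ℕ) := EuclideanSpace ℂ (Fin n)

/-- Span of the columns of `D` indexed by `B`. -/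
def colSpan {n d : ℕ} (D : Vec d →L[ℂ] Vec n) (B : Finset (Fin d)) : Submodule ℂ (Vec n) :=
  Submodule.span ℂ ((fun j => D (EuclideanSpace.single j 1)) '' (B : Set (Fin d)))

/-- Orthogonal projection onto the span of the columns of `D` indexed by `B`. -/
def P {n d : ℕ} (D : Vec d →L[ℂ] Vec n) (B : Finset (Fin d)) (z : Vec n) : Vec n :=
  ((colSpan D B).orthogonalProjection z : Vec n)

open Classical in
/-- `α` has at most `k` nonzero entries. -/
def sparse {d : ℕ} (k : ℕ) (α : Vec d) : Prop :=
  (Finset.univ.filter fun i => α i ≠ 0).card ≤ k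

/-- `A` satisfies the `D`-RIP of order `k` with constant `δ`. -/
def DRIP {m n d : ℕ} (A : Vec n →L[ℂ] Vec m) (D : Vec d →L[ℂ] Vec n) (k : ℕ) (δ : ℝ) : Prop :=
  ∀ α : Vec d, sparse k α →
    Real.sqrt (1 - δ) * ‖D α‖ ≤ ‖A (D α)‖ ∧ ‖A (D α)‖ ≤ Real.sqrt (1 + δ) * ‖D α‖

/-! The estimate is the usual quasi-optimality of least squares: the residual of `x̃` is at
most that of `P_T x`, which moves `‖A (x - x̃)‖` below `‖A (x - P_T x)‖ + 2‖e‖`. Both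
`x - x̃` and `x - P_T x` are `D β` for a `β` supported on `supp α ∪ T`, so the two sides of the
`D`-RIP of order `4k` turn this into the claimed bound. -/

theorem norm_map_sub_le_of_norm_residual_le {E F 𝓕 : Type*} [AddCommGroup E]
    [SeminormedAddCommGroup F] [FunLike 𝓕 E F] [AddMonoidHomClass 𝓕 E F] (A : 𝓕)
    {x u v : E} (e : F) (h : ‖A x + e - A u‖ ≤ ‖A x + e - A v‖) :
    ‖A (x - u)‖ ≤ ‖A (x - v)‖ + 2 * ‖e‖ :=
  calc ‖A (x - u)‖ = ‖(A x + e - A u) - e‖ := by rw [map_sub]; abel_nf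
    _ ≤ ‖A x + e - A u‖ + ‖e‖ := norm_sub_le _ _
    _ ≤ ‖A x + e - A v‖ + ‖e‖ := by gcongr
    _ = ‖A (x - v) + e‖ + ‖e‖ := by rw [map_sub]; abel_nf
    _ ≤ ‖A (x - v)‖ + 2 * ‖e‖ := by linarith [norm_add_le (A (x - v)) e]

theorem exists_eq_apply_of_mem_colSpan {n d : ℕ} {D : Vec d →L[ℂ] Vec n}
    {T : Finset (Fin d)} {v : Vec n} (hv : v ∈ colSpan D T) :
    ∃ β : Vec d, (∀ i ∉ T, β i = 0) ∧ D β = v := by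
  induction hv using Submodule.span_induction with
  | mem w hw =>
    obtain ⟨j, hj, rfl⟩ := hw
    refine ⟨EuclideanSpace.single j 1, fun i hi => ?_, rfl⟩
    have hij : i ≠ j := fun h => hi (h ▸ hj)
    simp [hij]
  | zero => exact ⟨0, fun _ _ => rfl, map_zero D⟩
  | add w₁ w₂ _ _ h₁ h₂ =>
    obtain ⟨β₁, hβ₁, rfl⟩ := h₁
    obtain ⟨β₂, hβ₂, rfl⟩ := h₂
    exact ⟨β₁ + β₂, fun i hi => by simp [hβ₁ i hi, hβ₂ i hi], map_add D β₁ β₂⟩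
  | smul c w _ h =>
    obtain ⟨β, hβ, rfl⟩ := h
    exact ⟨c • β, fun i hi => by simp [hβ i hi], map_smul D c β⟩

open Classical in
theorem sparse_sub_of_support_subset {d k : ℕ} {α β : Vec d} {T : Finset (Fin d)}
    (hα : sparse k α) (hβ : ∀ i ∉ T, β i = 0) : sparse (k + T.card) (α - β) := by
  have hsupp : (Finset.univ.filter fun i => (α - β) i ≠ 0) ⊆
      (Finset.univ.filter fun i => α i ≠ 0) ∪ T := by
    intro i hi
    by_contra hiαT
    simp only [Finset.mem_union, Finset.mem_filter, Finset.mem_univ, true_and, not_or,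
      not_not] at hi hiαT
    exact hi (by simp [hiαT.1, hβ i hiαT.2])
  calc _ ≤ ((Finset.univ.filter fun i => α i ≠ 0) ∪ T).card := Finset.card_le_card hsupp
    _ ≤ _ := (Finset.card_union_le _ _).trans (Nat.add_le_add_right hα _)

theorem DRIP.apply_sub_mem_colSpan {m n d k s : ℕ} {A : Vec n →L[ℂ] Vec m}
    {D : Vec d →L[ℂ] Vec n} {δ : ℝ} (hRIP : DRIP A D s δ) {α : Vec d} (hα : sparse k α)
    {T : Finset (Fin d)} (hs : k + T.card ≤ s) {v : Vec n} (hv : v ∈ colSpan D T) :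
    Real.sqrt (1 - δ) * ‖D α - v‖ ≤ ‖A (D α - v)‖ ∧
      ‖A (D α - v)‖ ≤ Real.sqrt (1 + δ) * ‖D α - v‖ := by
  obtain ⟨β, hβ, rfl⟩ := exists_eq_apply_of_mem_colSpan hv
  rw [← map_sub]
  exact hRIP (α - β) ((sparse_sub_of_support_subset hα hβ).trans hs)

theorem stmt6_general {m n d k : ℕ} (A : Vec n →L[ℂ] Vec m) (D : Vec d →L[ℂ] Vec n)
    (δ : ℝ) (hδ1 : δ < 1) (hRIP : DRIP A D (4 * k) δ)
    (x : Vec n) (α : Vec d) (hα : sparse k α) (hx : x = D α)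
    (e : Vec m) (y : Vec m) (hy : y = A x + e)
    (T : Finset (Fin d)) (hT : T.card ≤ 3 * k)
    (xt : Vec n) (hxtT : xt ∈ colSpan D T)
    (hxtMin : ∀ z ∈ colSpan D T, ‖y - A xt‖ ≤ ‖y - A z‖) :
    ‖x - xt‖ ≤ Real.sqrt ((1 + δ) / (1 - δ)) * ‖x - P D T x‖ +
      (2 / Real.sqrt (1 - δ)) * ‖e‖ := by
  subst hx hy
  have hPT : P D T (D α) ∈ colSpan D T := Submodule.coe_mem _
  have hcard : k + T.card ≤ 4 * k := by omega
  have hlower := (hRIP.apply_sub_mem_colSpan hα hcard hxtT).1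
  have hupper := (hRIP.apply_sub_mem_colSpan hα hcard hPT).2
  have hLS := norm_map_sub_le_of_norm_residual_le A e (hxtMin _ hPT)
  have hδ : 0 < 1 - δ := sub_pos.2 hδ1
  have hpos : 0 < Real.sqrt (1 - δ) := Real.sqrt_pos.2 hδ
  rw [Real.sqrt_div' _ hδ.le, div_mul_eq_mul_div,
    div_mul_eq_mul_div, ← add_div, le_div_iff₀ hpos]
  linarith

theorem stmt6 {m n d k : ℕ} (A : Vec n →L[ℂ] Vec m) (D : Vec d →L[ℂ] Vec n)
    (δ : ℝ) (hδ0 : 0 < δ) (hδ1 : δ < 1) (hRIP : DRIP A D (4 * k) δ)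
    (x : Vec n) (α : Vec d) (hα : sparse k α) (hx : x = D α)
    (e : Vec m) (y : Vec m) (hy : y = A x + e)
    (T : Finset (Fin d)) (hT : T.card ≤ 3 * k)
    (xt : Vec n) (hxtT : xt ∈ colSpan D T)
    (hxtMin : ∀ z ∈ colSpan D T, ‖y - A xt‖ ≤ ‖y - A z‖) :
    ‖x - xt‖ ≤ Real.sqrt ((1 + δ) / (1 - δ)) * ‖x - P D T x‖ +
      (2 / Real.sqrt (1 - δ)) * ‖e‖ :=
  stmt6_general A D δ hδ1 hRIP x α hα hx e y hy T hT xt hxtT hxtMin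
end
end

section
/- (Estimate/pruning step bound) Let x be k-sparse in D and x̃ ∈ ℂ^n arbitrary. Let Γ = S_D(x̃, k) be a near-optimal size-k support for x̃ with parameter ε₂, and set x^{ℓ+1} = P_Γ x̃. Then ‖x − x^{ℓ+1}‖ ≤ (2+ε₂)‖x − x̃‖. -/
noncomputable section

/-! The optimal support does at least as well as any size-`k` support containing the support
of `α`, hence at least as well as `x` itself: `‖x̃ - P_{Λ_opt} x̃‖ ≤ ‖x - x̃‖`. The triangle
inequality through `x̃` and `P_{Λ_opt} x̃` then gives
`‖x - P_Γ x̃‖ ≤ ‖x - x̃‖ + ‖x̃ - P_{Λ_opt} x̃‖ + ε₂ ‖x̃ - P_{Λ_opt} x̃‖ ≤ (2 + ε₂) ‖x - x̃‖`. -/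

theorem Submodule.norm_sub_starProjection_le {𝕜 E : Type*} [RCLike 𝕜] [NormedAddCommGroup E]
    [InnerProductSpace 𝕜 E] (K : Submodule 𝕜 E) [K.HasOrthogonalProjection] (z : E) {y : E}
    (hy : y ∈ K) : ‖z - K.starProjection z‖ ≤ ‖z - y‖ := by
  rw [Submodule.starProjection_minimal]
  exact ciInf_le ⟨0, fun _ ⟨_, h⟩ => h ▸ norm_nonneg _⟩ (⟨y, hy⟩ : K)

theorem norm_sub_P_le {n d : ℕ} (D : Vec d →L[ℂ] Vec n) (Λ : Finset (Fin d)) (z : Vec n)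
    {y : Vec n} (hy : y ∈ colSpan D Λ) : ‖z - P D Λ z‖ ≤ ‖z - y‖ :=
  (colSpan D Λ).norm_sub_starProjection_le z hy

open Classical in
theorem apply_mem_colSpan {n d : ℕ} (D : Vec d →L[ℂ] Vec n) {Λ : Finset (Fin d)} {α : Vec d}
    (hsupp : Finset.univ.filter (fun i => α i ≠ 0) ⊆ Λ) : D α ∈ colSpan D Λ := by
  rw [← (EuclideanSpace.basisFun (Fin d) ℂ).sum_repr α, map_sum]
  refine Submodule.sum_mem _ fun j _ => ?_
  by_cases hj : α j = 0
  · simp [hj]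
  · rw [map_smul, EuclideanSpace.basisFun_apply]
    exact Submodule.smul_mem _ _ <| Submodule.subset_span
      ⟨j, hsupp (Finset.mem_filter.mpr ⟨Finset.mem_univ j, hj⟩), rfl⟩

theorem sparse.exists_card_eq_apply_mem_colSpan {n d k : ℕ} (D : Vec d →L[ℂ] Vec n) {α : Vec d}
    (hα : sparse k α) (hkd : k ≤ d) : ∃ Λ : Finset (Fin d), Λ.card = k ∧ D α ∈ colSpan D Λ := by
  classical
  obtain ⟨Λ, hsupp, hΛ⟩ := Finset.exists_superset_card_eq hα (by simpa using hkd)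
  exact ⟨Λ, hΛ, apply_mem_colSpan D hsupp⟩

theorem norm_sub_P_opt_le_of_sparse {n d k : ℕ} (D : Vec d →L[ℂ] Vec n) {α : Vec d} (hα : sparse k α)
    (xt : Vec n) (Γopt : Finset (Fin d)) (hΓoptCard : Γopt.card = k)
    (hopt : ∀ Λ : Finset (Fin d), Λ.card = k → ‖xt - P D Γopt xt‖ ≤ ‖xt - P D Λ xt‖) :
    ‖xt - P D Γopt xt‖ ≤ ‖D α - xt‖ := by
  have hkd : k ≤ d := hΓoptCard ▸ (Finset.card_le_univ Γopt).trans_eq (Fintype.card_fin d)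
  obtain ⟨Λ, hΛ, hmem⟩ := hα.exists_card_eq_apply_mem_colSpan D hkd
  calc ‖xt - P D Γopt xt‖ ≤ ‖xt - P D Λ xt‖ := hopt Λ hΛ
    _ ≤ ‖xt - D α‖ := norm_sub_P_le D Λ xt hmem
    _ = ‖D α - xt‖ := norm_sub_rev _ _

theorem stmt7_general {n d k : ℕ} (D : Vec d →L[ℂ] Vec n)
    (ε₂ : ℝ) (hε₂ : 0 ≤ ε₂)
    (x : Vec n) (α : Vec d) (hα : sparse k α) (hx : x = D α)
    (xt : Vec n)
    (Γopt Γ : Finset (Fin d)) (hΓoptCard : Γopt.card = k)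
    (hopt : ∀ Λ : Finset (Fin d), Λ.card = k → ‖xt - P D Γopt xt‖ ≤ ‖xt - P D Λ xt‖)
    (hnear : ‖P D Γopt xt - P D Γ xt‖ ≤ ε₂ * ‖xt - P D Γopt xt‖)
    (xnext : Vec n) (hxnext : xnext = P D Γ xt) :
    ‖x - xnext‖ ≤ (2 + ε₂) * ‖x - xt‖ := by
  subst hx hxnext
  have hres := norm_sub_P_opt_le_of_sparse D hα xt Γopt hΓoptCard hopt
  calc ‖D α - P D Γ xt‖
      ≤ ‖D α - xt‖ + ‖xt - P D Γopt xt‖ + ‖P D Γopt xt - P D Γ xt‖ := by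
        simpa only [dist_eq_norm] using dist_triangle4 (D α) xt (P D Γopt xt) (P D Γ xt)
    _ ≤ ‖D α - xt‖ + ‖D α - xt‖ + ε₂ * ‖D α - xt‖ := by
        gcongr
        exact hnear.trans (mul_le_mul_of_nonneg_left hres hε₂)
    _ = (2 + ε₂) * ‖D α - xt‖ := by ring

theorem stmt7 {n d k : ℕ} (D : Vec d →L[ℂ] Vec n)
    (ε₂ : ℝ) (hε₂ : 0 ≤ ε₂)
    (x : Vec n) (α : Vec d) (hα : sparse k α) (hx : x = D α)
    (xt : Vec n)
    (Γopt Γ : Finset (Fin d)) (hΓoptCard : Γopt.card = k)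
    (hopt : ∀ Λ : Finset (Fin d), Λ.card = k → ‖xt - P D Γopt xt‖ ≤ ‖xt - P D Λ xt‖)
    (hΓcard : Γ.card = k)
    (hnear : ‖P D Γopt xt - P D Γ xt‖ ≤ ε₂ * ‖xt - P D Γopt xt‖)
    (xnext : Vec n) (hxnext : xnext = P D Γ xt) :
    ‖x - xnext‖ ≤ (2 + ε₂) * ‖x - xt‖ :=
  stmt7_general D ε₂ hε₂ x α hα hx xt Γopt Γ hΓoptCard hopt hnear xnext hxnext
end
end
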